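/- Let H = ℝⁿ, let S : ℝⁿ × ℝ^m → ℝ be convex and continuous, h : ℝⁿ → ℝ convex and continuously differentiable, and L an invertible m × m real matrix. Define U := {x ∈ ℝⁿ : S(x,0) < h(x)}, and for λ > 0 define ρ_λ(x,v) := sup{ r > 0 : M_λS(x, r·Lv) ≤ h(x) } ∈ (0, +∞] and ρ₀(x,v) := sup{ r > 0 : S(x, r·Lv) ≤ h(x) } ∈ (0, +∞]. Then ρ is jointly continuous in (λ, x, v): for every sequence (λ_k, x_k, v_k) → (λ, x, v) ∈ [0,∞) × U × 𝕊^{m−1} with λ_k > 0, one has ρ_{λ_k}(x_k, v_k) → ρ_λ(x, v) in [0, +∞] (where convergence to +∞ is allowed). (Proposition 4.1.) -/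

import Mathlib

/-!
For `λ > 0` the Moreau envelope `M_λ S` is the infimal convolution of `S` with the perspective
`(λ, w) ↦ ‖w‖² / (2λ)` of the squared norm, so it is jointly convex in `(λ, w)`, hence continuous
on `λ > 0`. As `λ → 0⁺` it is squeezed between `S` and the affine minorants `a` of `S` shifted by
`λ ‖∇a‖² / 2`, so extending it by `S` at `λ = 0` keeps it continuous on `[0, ∞) × ℝⁿ × ℝᵐ`.

Along each ray, `r ↦ M_λ S(x, r • L v)` is convex and lies below `h x` at `r = 0` (because
`M_λ S ≤ S` and `x ∈ U`). For convex functions `φ` with `φ 0 < c`, the radius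
`sup {r > 0 | φ r ≤ c}` is continuous under pointwise convergence of `(φ, c)`: a radius strictly
inside satisfies `φ r < c` and survives small perturbations, and a radius strictly outside
satisfies `φ r > c`, which by convexity bounds the whole sublevel set of nearby functions.
-/

open Filter Topology Set

/-- Moreau envelope of `S : ℝⁿ × ℝ^m → ℝ` in two arguments. -/
noncomputable def moreauEnv2 {H E : Type*} [NormedAddCommGroup H] [InnerProductSpace ℝ H]
    [NormedAddCommGroup E] [InnerProductSpace ℝ E]
    (S : H → E → ℝ) (lam : ℝ) (x : H) (z : E) : ℝ :=
  ⨅ u : H × E, (S u.1 u.2 + (‖x - u.1‖ ^ 2 + ‖z - u.2‖ ^ 2) / (2 * lam))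

section ConvexReal

variable {φ : ℝ → ℝ} {c r r' : ℝ}

lemma ConvexOn.le_of_mem_Icc (hφ : ConvexOn ℝ univ φ) (h0 : φ 0 ≤ c) (hr' : φ r' ≤ c)
    (hr : r ∈ Icc 0 r') : φ r ≤ c :=
  (hφ.le_on_segment (mem_univ _) (mem_univ _) (by rwa [segment_eq_Icc (hr.1.trans hr.2)])).trans
    (max_le h0 hr')

lemma ConvexOn.lt_of_mem_Ioo (hφ : ConvexOn ℝ univ φ) (h0 : φ 0 < c) (hr' : φ r' ≤ c)
    (hr : r ∈ Ioo 0 r') : φ r < c := by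
  by_contra! hc
  have hseg : r ∈ openSegment ℝ 0 r' := by rwa [openSegment_eq_Ioo (hr.1.trans hr.2)]
  exact (hφ.lt_right_of_left_lt (mem_univ _) (mem_univ _) hseg (h0.trans_le hc)).not_ge
    (hr'.trans hc)

lemma ConvexOn.comp_add_smul {V : Type*} [AddCommGroup V] [Module ℝ V] {G : V → ℝ}
    (hG : ConvexOn ℝ univ G) (p q : V) : ConvexOn ℝ univ fun r : ℝ => G (p + r • q) := by
  simpa [Function.comp_def, AffineMap.lineMap_apply_module', add_comm] using
    hG.comp_affineMap (AffineMap.lineMap p (p + q))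

end ConvexReal

section RayRadius

noncomputable def rayRadius (φ : ℝ → ℝ) (c : ℝ) : EReal :=
  sSup {e : EReal | ∃ r : ℝ, 0 < r ∧ e = r ∧ φ r ≤ c}

lemma rayRadius_pos {φ : ℝ → ℝ} {c : ℝ} (hφ : ContinuousAt φ 0) (h0 : φ 0 < c) :
    0 < rayRadius φ c := by
  have hev : ∀ᶠ r in 𝓝[>] (0 : ℝ), φ r < c ∧ 0 < r :=
    (eventually_nhdsWithin_of_eventually_nhds (hφ.eventually_lt continuousAt_const h0)).and
      self_mem_nhdsWithin
  obtain ⟨r, hr, hr0⟩ := hev.exists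
  exact (EReal.coe_pos.mpr hr0).trans_le (le_sSup ⟨r, hr0, rfl, hr.le⟩)

variable {ι : Type*} {l : Filter ι} {φ : ι → ℝ → ℝ} {φ₀ : ℝ → ℝ} {c : ι → ℝ} {c₀ : ℝ}

lemma eventually_lt_rayRadius (hφ : ∀ r, Tendsto (fun i => φ i r) l (𝓝 (φ₀ r)))
    (hc : Tendsto c l (𝓝 c₀)) (hφ₀ : ConvexOn ℝ univ φ₀) (h0 : φ₀ 0 < c₀) {b : EReal}
    (hb : b < rayRadius φ₀ c₀) : ∀ᶠ i in l, b < rayRadius (φ i) (c i) := by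
  obtain ⟨_, ⟨r', hr', rfl, hφr'⟩, hbr'⟩ := lt_sSup_iff.mp hb
  obtain ⟨r, hbr, hrr'⟩ :=
    EReal.lt_iff_exists_real_btwn.mp (max_lt hbr' (EReal.coe_pos.mpr hr'))
  have hr : r ∈ Ioo 0 r' :=
    ⟨EReal.coe_pos.mp ((le_max_right _ _).trans_lt hbr), EReal.coe_lt_coe_iff.mp hrr'⟩
  filter_upwards [(hφ r).eventually_lt hc (hφ₀.lt_of_mem_Ioo h0 hφr' hr)] with i hi
  exact ((le_max_left _ _).trans_lt hbr).trans_le (le_sSup ⟨r, hr.1, rfl, hi.le⟩)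

lemma eventually_rayRadius_lt (hφi : ∀ i, ConvexOn ℝ univ (φ i))
    (hφ : ∀ r, Tendsto (fun i => φ i r) l (𝓝 (φ₀ r))) (hc : Tendsto c l (𝓝 c₀))
    (hφ₀ : ConvexOn ℝ univ φ₀) (h0 : φ₀ 0 < c₀) {b : EReal} (hb : rayRadius φ₀ c₀ < b) :
    ∀ᶠ i in l, rayRadius (φ i) (c i) < b := by
  have hρ : 0 < rayRadius φ₀ c₀ :=
    rayRadius_pos ((hφ₀.continuousOn isOpen_univ).continuousAt univ_mem) h0
  obtain ⟨r, hρr, hrb⟩ := EReal.lt_iff_exists_real_btwn.mp hb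
  have hr : 0 < r := EReal.coe_pos.mp (hρ.trans hρr)
  have hφr : c₀ < φ₀ r := not_le.mp fun h => hρr.not_ge (le_sSup ⟨r, hr, rfl, h⟩)
  filter_upwards [(hφ 0).eventually_lt hc h0, hc.eventually_lt (hφ r) hφr] with i h0i hri
  refine (sSup_le ?_).trans_lt hrb
  rintro _ ⟨r', -, rfl, hφr'⟩
  by_contra! hrr'
  exact hri.not_ge ((hφi i).le_of_mem_Icc h0i.le hφr' ⟨hr.le, (EReal.coe_lt_coe_iff.mp hrr').le⟩)

theorem tendsto_rayRadius (hφi : ∀ i, ConvexOn ℝ univ (φ i))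
    (hφ : ∀ r, Tendsto (fun i => φ i r) l (𝓝 (φ₀ r))) (hc : Tendsto c l (𝓝 c₀))
    (hφ₀ : ConvexOn ℝ univ φ₀) (h0 : φ₀ 0 < c₀) :
    Tendsto (fun i => rayRadius (φ i) (c i)) l (𝓝 (rayRadius φ₀ c₀)) :=
  tendsto_order.2 ⟨fun _ hb => eventually_lt_rayRadius hφ hc hφ₀ h0 hb,
    fun _ hb => eventually_rayRadius_lt hφi hφ hc hφ₀ h0 hb⟩

end RayRadius

lemma convex_comb_sq_div_le {t t' a b lam lam' : ℝ} (ht : 0 ≤ t) (ht' : 0 ≤ t')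
    (htt' : t + t' = 1) (hl : 0 < lam) (hl' : 0 < lam') :
    (t * a + t' * b) ^ 2 / (t * lam + t' * lam') ≤ t * (a ^ 2 / lam) + t' * (b ^ 2 / lam') := by
  have hd : 0 < t * lam + t' * lam' := by
    rcases ht.eq_or_lt with rfl | ht
    · simp_all
    · positivity
  rw [div_le_iff₀ hd]
  have key : (t * (a ^ 2 / lam) + t' * (b ^ 2 / lam')) * (t * lam + t' * lam')
      - (t * a + t' * b) ^ 2 = t * t' * (a * lam' - b * lam) ^ 2 / (lam * lam') := by
    field_simp
    ring
  have : 0 ≤ t * t' * (a * lam' - b * lam) ^ 2 / (lam * lam') := by positivity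
  linarith

section NormedSpace

variable {W : Type*} [NormedAddCommGroup W] [NormedSpace ℝ W]

lemma norm_convex_comb_sq_div_le (d d' : W) {t t' lam lam' : ℝ} (ht : 0 ≤ t) (ht' : 0 ≤ t')
    (htt' : t + t' = 1) (hl : 0 < lam) (hl' : 0 < lam') :
    ‖t • d + t' • d'‖ ^ 2 / (2 * (t * lam + t' * lam')) ≤
      t * (‖d‖ ^ 2 / (2 * lam)) + t' * (‖d'‖ ^ 2 / (2 * lam')) := by
  have htri : ‖t • d + t' • d'‖ ≤ t * ‖d‖ + t' * ‖d'‖ := by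
    simpa [norm_smul, abs_of_nonneg ht, abs_of_nonneg ht'] using norm_add_le (t • d) (t' • d')
  have := convex_comb_sq_div_le (a := ‖d‖) (b := ‖d'‖) ht ht' htt' hl hl'
  calc ‖t • d + t' • d'‖ ^ 2 / (2 * (t * lam + t' * lam'))
      ≤ (t * ‖d‖ + t' * ‖d'‖) ^ 2 / (2 * (t * lam + t' * lam')) := by gcongr
    _ ≤ _ := by
      simp only [mul_comm (2 : ℝ), ← div_div]
      linarith

lemma ContinuousLinearMap.apply_le_mul_norm_sq_add (g : W →L[ℝ] ℝ) {lam : ℝ} (hlam : 0 < lam)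
    (v : W) : g v ≤ lam * ‖g‖ ^ 2 / 2 + ‖v‖ ^ 2 / (2 * lam) := by
  have hgv : g v ≤ ‖g‖ * ‖v‖ := (le_abs_self _).trans (g.le_opNorm v)
  have hamgm : ‖g‖ * ‖v‖ ≤ lam * ‖g‖ ^ 2 / 2 + ‖v‖ ^ 2 / (2 * lam) := by
    rw [div_add_div _ _ two_ne_zero (by positivity), le_div_iff₀ (by positivity)]
    nlinarith [sq_nonneg (lam * ‖g‖ - ‖v‖)]
  exact hgv.trans hamgm

lemma ConvexOn.exists_affine_le_of_lt_univ {f : W → ℝ} (hf : ConvexOn ℝ univ f)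
    (hfc : LowerSemicontinuous f) {w : W} {a : ℝ} (ha : a < f w) :
    ∃ (g : W →L[ℝ] ℝ) (c : ℝ), (∀ u, g u + c ≤ f u) ∧ g w + c = a := by
  obtain ⟨g, c, hle, heq⟩ := hf.exists_affine_le_of_lt (𝕜 := ℝ) (mem_univ w) ha isClosed_univ
    (hfc.lowerSemicontinuousOn univ)
  exact ⟨g, c, fun u => by simpa using hle ⟨u, mem_univ u⟩, by simpa using heq⟩

end NormedSpace

section MoreauEnvelope

variable {W : Type*} [NormedAddCommGroup W] {f : W → ℝ} {lam : ℝ}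

noncomputable def moreauEnvelope (f : W → ℝ) (lam : ℝ) (w : W) : ℝ :=
  if lam = 0 then f w else ⨅ u, f u + ‖w - u‖ ^ 2 / (2 * lam)

@[simp]
lemma moreauEnvelope_zero (f : W → ℝ) : moreauEnvelope f 0 = f :=
  funext fun _ => if_pos rfl

lemma moreauEnvelope_of_ne_zero (hlam : lam ≠ 0) (w : W) :
    moreauEnvelope f lam w = ⨅ u, f u + ‖w - u‖ ^ 2 / (2 * lam) :=
  if_neg hlam

lemma exists_add_lt_moreauEnvelope_add (hlam : lam ≠ 0) (w : W) {ε : ℝ} (hε : 0 < ε) :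
    ∃ u, f u + ‖w - u‖ ^ 2 / (2 * lam) < moreauEnvelope f lam w + ε := by
  rw [moreauEnvelope_of_ne_zero hlam]
  exact exists_lt_of_ciInf_lt (lt_add_of_pos_right _ hε)

variable [NormedSpace ℝ W]

lemma le_add_norm_sub_sq_div_of_affine_le {g : W →L[ℝ] ℝ} {c : ℝ} (hg : ∀ u, g u + c ≤ f u)
    (hlam : 0 < lam) (w u : W) :
    g w + c - lam * ‖g‖ ^ 2 / 2 ≤ f u + ‖w - u‖ ^ 2 / (2 * lam) := by
  have hgwu := g.apply_le_mul_norm_sq_add hlam (w - u)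
  rw [map_sub] at hgwu
  linarith [hg u]

lemma affine_sub_le_moreauEnvelope {g : W →L[ℝ] ℝ} {c : ℝ} (hg : ∀ u, g u + c ≤ f u)
    (hlam : 0 ≤ lam) (w : W) : g w + c - lam * ‖g‖ ^ 2 / 2 ≤ moreauEnvelope f lam w := by
  rcases hlam.eq_or_lt with rfl | hlam
  · simpa using hg w
  · rw [moreauEnvelope_of_ne_zero hlam.ne']
    exact le_ciInf (le_add_norm_sub_sq_div_of_affine_le hg hlam w)

lemma bddBelow_moreau (hf : ConvexOn ℝ univ f) (hfc : LowerSemicontinuous f) (hlam : 0 < lam)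
    (w : W) : BddBelow (range fun u => f u + ‖w - u‖ ^ 2 / (2 * lam)) := by
  obtain ⟨g, c, hg, -⟩ := hf.exists_affine_le_of_lt_univ hfc (sub_one_lt (f w))
  exact ⟨_, forall_mem_range.2 (le_add_norm_sub_sq_div_of_affine_le hg hlam w)⟩

lemma moreauEnvelope_le_add (hf : ConvexOn ℝ univ f) (hfc : LowerSemicontinuous f)
    (hlam : 0 < lam) (w u : W) : moreauEnvelope f lam w ≤ f u + ‖w - u‖ ^ 2 / (2 * lam) := by
  rw [moreauEnvelope_of_ne_zero hlam.ne']
  exact ciInf_le (bddBelow_moreau hf hfc hlam w) u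

lemma moreauEnvelope_le (hf : ConvexOn ℝ univ f) (hfc : LowerSemicontinuous f) (hlam : 0 ≤ lam)
    (w : W) : moreauEnvelope f lam w ≤ f w := by
  rcases hlam.eq_or_lt with rfl | hlam
  · simp
  · simpa using moreauEnvelope_le_add hf hfc hlam w w

lemma convexOn_moreauEnvelope_Ioi (hf : ConvexOn ℝ univ f) (hfc : LowerSemicontinuous f) :
    ConvexOn ℝ (Ioi 0 ×ˢ univ) fun p : ℝ × W => moreauEnvelope f p.1 p.2 := by
  refine ⟨(convex_Ioi 0).prod convex_univ, ?_⟩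
  rintro ⟨lam, w⟩ ⟨hlam : 0 < lam, -⟩ ⟨lam', w'⟩ ⟨hlam' : 0 < lam', -⟩ t t' ht ht' htt'
  simp only [Prod.smul_mk, Prod.mk_add_mk, smul_eq_mul]
  have hmix : 0 < t * lam + t' * lam' := by
    rcases ht.eq_or_lt with rfl | ht
    · simp_all
    · positivity
  refine le_of_forall_pos_le_add fun ε hε => ?_
  obtain ⟨u, hu⟩ := exists_add_lt_moreauEnvelope_add (f := f) hlam.ne' w hε
  obtain ⟨u', hu'⟩ := exists_add_lt_moreauEnvelope_add (f := f) hlam'.ne' w' hε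
  have hdiff : t • w + t' • w' - (t • u + t' • u') = t • (w - u) + t' • (w' - u') := by
    simp only [smul_sub]
    abel
  have hfu : f (t • u + t' • u') ≤ t * f u + t' * f u' :=
    hf.2 (mem_univ u) (mem_univ u') ht ht' htt'
  have hnorm := norm_convex_comb_sq_div_le (w - u) (w' - u') ht ht' htt' hlam hlam'
  calc moreauEnvelope f (t * lam + t' * lam') (t • w + t' • w')
      ≤ f (t • u + t' • u') + ‖t • (w - u) + t' • (w' - u')‖ ^ 2 / (2 * (t * lam + t' * lam')) :=
        hdiff ▸ moreauEnvelope_le_add hf hfc hmix _ _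
    _ ≤ t * (f u + ‖w - u‖ ^ 2 / (2 * lam)) + t' * (f u' + ‖w' - u'‖ ^ 2 / (2 * lam')) := by
        linarith
    _ ≤ t * (moreauEnvelope f lam w + ε) + t' * (moreauEnvelope f lam' w' + ε) := by
        gcongr
    _ = t * moreauEnvelope f lam w + t' * moreauEnvelope f lam' w' + ε := by
        linear_combination ε * htt'

lemma convexOn_moreauEnvelope (hf : ConvexOn ℝ univ f) (hfc : LowerSemicontinuous f)
    (hlam : 0 ≤ lam) : ConvexOn ℝ univ (moreauEnvelope f lam) := by
  rcases hlam.eq_or_lt with rfl | hlam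
  · simpa using hf
  refine ⟨convex_univ, fun w _ w' _ t t' ht ht' htt' => ?_⟩
  have := (convexOn_moreauEnvelope_Ioi hf hfc).2 (x := (lam, w)) (y := (lam, w'))
    ⟨hlam, trivial⟩ ⟨hlam, trivial⟩ ht ht' htt'
  simpa [← add_mul, htt'] using this

lemma continuousWithinAt_moreauEnvelope_zero (hf : ConvexOn ℝ univ f) (hfc : Continuous f)
    (w : W) :
    ContinuousWithinAt (fun p : ℝ × W => moreauEnvelope f p.1 p.2) (Ici 0 ×ˢ univ) (0, w) := by
  have hnonneg : ∀ᶠ p in 𝓝[Ici 0 ×ˢ univ] ((0 : ℝ), w), 0 ≤ p.1 :=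
    eventually_mem_nhdsWithin.mono fun p hp => hp.1
  refine tendsto_order.2 ⟨fun a ha => ?_, fun b hb => ?_⟩
  · obtain ⟨a', haa', ha'⟩ := exists_between (show a < f w by simpa using ha)
    obtain ⟨g, c, hg, rfl⟩ := hf.exists_affine_le_of_lt_univ hfc.lowerSemicontinuous ha'
    have hlow : ContinuousAt (fun p : ℝ × W => g p.2 + c - p.1 * ‖g‖ ^ 2 / 2) (0, w) := by
      fun_prop
    filter_upwards [nhdsWithin_le_nhds (continuousAt_const.eventually_lt hlow
      (by simpa using haa')), hnonneg] with p hp hp0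
    exact hp.trans_le (affine_sub_le_moreauEnvelope hg hp0 p.2)
  · have hup : ContinuousAt (fun p : ℝ × W => f p.2) (0, w) := by fun_prop
    filter_upwards [nhdsWithin_le_nhds (hup.eventually_lt continuousAt_const (by simpa using hb)),
      hnonneg] with p hp hp0
    exact (moreauEnvelope_le hf hfc.lowerSemicontinuous hp0 p.2).trans_lt hp

theorem continuousOn_moreauEnvelope [FiniteDimensional ℝ W] (hf : ConvexOn ℝ univ f)
    (hfc : Continuous f) :
    ContinuousOn (fun p : ℝ × W => moreauEnvelope f p.1 p.2) (Ici 0 ×ˢ univ) := by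
  rintro ⟨lam, w⟩ ⟨hlam : 0 ≤ lam, -⟩
  rcases hlam.eq_or_lt with rfl | hlam
  · exact continuousWithinAt_moreauEnvelope_zero hf hfc w
  · exact ((convexOn_moreauEnvelope_Ioi hf hfc.lowerSemicontinuous).continuousOn
      (isOpen_Ioi.prod isOpen_univ) |>.continuousAt
      (prod_mem_nhds (Ioi_mem_nhds hlam) univ_mem)).continuousWithinAt

end MoreauEnvelope

lemma moreauEnv2_eq_moreauEnvelope {H E : Type*} [NormedAddCommGroup H] [InnerProductSpace ℝ H]
    [NormedAddCommGroup E] [InnerProductSpace ℝ E] (S : H → E → ℝ) {lam : ℝ} (hlam : lam ≠ 0)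
    (x : H) (z : E) :
    moreauEnv2 S lam x z =
      moreauEnvelope (fun p : WithLp 2 (H × E) => S p.fst p.snd) lam (WithLp.toLp 2 (x, z)) := by
  rw [moreauEnvelope_of_ne_zero hlam, moreauEnv2, ← (WithLp.equiv 2 (H × E)).symm.iInf_comp]
  simp [WithLp.prod_norm_sq_eq_of_L2]

section ProdL2

variable {H E : Type*} [NormedAddCommGroup H] [NormedSpace ℝ H] [NormedAddCommGroup E]
  [NormedSpace ℝ E] {f : WithLp 2 (H × E) → ℝ} {lam : ℝ}

lemma convexOn_moreauEnvelope_toLp_smul (hf : ConvexOn ℝ univ f) (hfc : LowerSemicontinuous f)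
    (hlam : 0 ≤ lam) (x : H) (z : E) :
    ConvexOn ℝ univ fun r : ℝ => moreauEnvelope f lam (WithLp.toLp 2 (x, r • z)) := by
  have hline : ∀ r : ℝ,
      WithLp.toLp 2 (x, r • z) = WithLp.toLp 2 (x, 0) + r • WithLp.toLp 2 ((0 : H), z) :=
    fun r => by rw [← WithLp.toLp_smul, ← WithLp.toLp_add]; simp
  simpa [hline] using (convexOn_moreauEnvelope hf hfc hlam).comp_add_smul _ _

lemma tendsto_moreauEnvelope_toLp [FiniteDimensional ℝ H] [FiniteDimensional ℝ E]
    (hf : ConvexOn ℝ univ f) (hfc : Continuous f) {ι : Type*} {l : Filter ι} {lam' : ι → ℝ}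
    {x' : ι → H} {z' : ι → E} {x : H} {z : E} (hlam' : ∀ᶠ i in l, 0 ≤ lam' i) (hlam : 0 ≤ lam)
    (hlim : Tendsto lam' l (𝓝 lam)) (hx : Tendsto x' l (𝓝 x)) (hz : Tendsto z' l (𝓝 z)) :
    Tendsto (fun i => moreauEnvelope f (lam' i) (WithLp.toLp 2 (x' i, z' i))) l
      (𝓝 (moreauEnvelope f lam (WithLp.toLp 2 (x, z)))) := by
  have hpair : Tendsto (fun i => (lam' i, WithLp.toLp 2 (x' i, z' i))) l
      (𝓝[Ici 0 ×ˢ univ] (lam, WithLp.toLp 2 (x, z))) :=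
    tendsto_nhdsWithin_iff.2 ⟨hlim.prodMk_nhds
      (((WithLp.prod_continuous_toLp 2 _ _).tendsto _).comp (hx.prodMk_nhds hz)),
      hlam'.mono fun i hi => mk_mem_prod hi (mem_univ _)⟩
  exact (continuousOn_moreauEnvelope hf hfc _ (mk_mem_prod hlam (mem_univ _))).tendsto.comp hpair

end ProdL2

theorem stmt11_general {n m : ℕ}
    (S : EuclideanSpace ℝ (Fin n) → EuclideanSpace ℝ (Fin m) → ℝ)
    (hSconv : ConvexOn ℝ Set.univ
      fun q : EuclideanSpace ℝ (Fin n) × EuclideanSpace ℝ (Fin m) => S q.1 q.2)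
    (hScont : Continuous
      fun q : EuclideanSpace ℝ (Fin n) × EuclideanSpace ℝ (Fin m) => S q.1 q.2)
    (h : EuclideanSpace ℝ (Fin n) → ℝ)
    (hC1 : ContDiff ℝ 1 h)
    (L : EuclideanSpace ℝ (Fin m) ≃L[ℝ] EuclideanSpace ℝ (Fin m))
    (M : ℝ → EuclideanSpace ℝ (Fin n) → EuclideanSpace ℝ (Fin m) → ℝ)
    (hM0 : ∀ x z, M 0 x z = S x z)
    (hMpos : ∀ lam : ℝ, 0 < lam → ∀ x z, M lam x z = moreauEnv2 S lam x z)
    (rho : ℝ → EuclideanSpace ℝ (Fin n) → EuclideanSpace ℝ (Fin m) → EReal)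
    (hrho : ∀ lam x v, rho lam x v =
      sSup {e : EReal | ∃ r : ℝ, 0 < r ∧ e = (r : EReal) ∧ M lam x (r • L v) ≤ h x}) :
    ∀ lam : ℝ, 0 ≤ lam → ∀ x : EuclideanSpace ℝ (Fin n), S x 0 < h x →
    ∀ v : EuclideanSpace ℝ (Fin m), ‖v‖ = 1 →
    ∀ (lamk : ℕ → ℝ) (xk : ℕ → EuclideanSpace ℝ (Fin n))
      (vk : ℕ → EuclideanSpace ℝ (Fin m)),
      (∀ k, 0 < lamk k) → Tendsto lamk atTop (𝓝 lam) →
      Tendsto xk atTop (𝓝 x) → Tendsto vk atTop (𝓝 v) →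
      Tendsto (fun k => rho (lamk k) (xk k) (vk k)) atTop (𝓝 (rho lam x v)) := by
  intro lam hlam x hx v _ lamk xk vk hlamk hlamk_lim hxk hvk
  set F : WithLp 2 (EuclideanSpace ℝ (Fin n) × EuclideanSpace ℝ (Fin m)) → ℝ :=
    fun p => S p.fst p.snd
  have hFconv : ConvexOn ℝ univ F :=
    hSconv.comp_linearMap (WithLp.linearEquiv 2 ℝ _).toLinearMap
  have hFcont : Continuous F := hScont.comp (WithLp.prod_continuous_ofLp 2 _ _)
  have hM : ∀ μ, 0 ≤ μ → ∀ y z, M μ y z = moreauEnvelope F μ (WithLp.toLp 2 (y, z)) := by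
    intro μ hμ y z
    rcases hμ.eq_or_lt with rfl | hμ
    · simp [hM0, F]
    · rw [hMpos μ hμ, moreauEnv2_eq_moreauEnvelope S hμ.ne']
  simp only [hrho, hM _ (hlamk _).le, hM lam hlam]
  refine tendsto_rayRadius
    (fun k => convexOn_moreauEnvelope_toLp_smul hFconv hFcont.lowerSemicontinuous (hlamk k).le _ _)
    (fun r => tendsto_moreauEnvelope_toLp hFconv hFcont (.of_forall fun k => (hlamk k).le) hlam
      hlamk_lim hxk (((L.continuous.tendsto v).comp hvk).const_smul r))
    ((hC1.continuous.tendsto x).comp hxk)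
    (convexOn_moreauEnvelope_toLp_smul hFconv hFcont.lowerSemicontinuous hlam _ _) ?_
  simpa using (moreauEnvelope_le hFconv hFcont.lowerSemicontinuous hlam _).trans_lt hx

/-- Proposition 4.1 (joint continuity of the radial function): with `S` convex continuous,
`h` convex `C¹`, `L` an invertible linear map of `ℝ^m`, `M λ = M_λS` for `λ > 0` and
`M 0 = S`, and `ρ_λ(x,v) = sup{ r > 0 : M λ (x, r·Lv) ≤ h(x) } ∈ (0,+∞]` (an `EReal`-valued
supremum), for every sequence `(λ_k, x_k, v_k) → (λ, x, v) ∈ [0,∞) × U × 𝕊^{m−1}` with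
`λ_k > 0`, where `U = {x : S(x,0) < h(x)}`, one has `ρ_{λ_k}(x_k,v_k) → ρ_λ(x,v)` in
`[0,+∞]`. -/
theorem stmt11 {n m : ℕ}
    (S : EuclideanSpace ℝ (Fin n) → EuclideanSpace ℝ (Fin m) → ℝ)
    (hSconv : ConvexOn ℝ Set.univ
      fun q : EuclideanSpace ℝ (Fin n) × EuclideanSpace ℝ (Fin m) => S q.1 q.2)
    (hScont : Continuous
      fun q : EuclideanSpace ℝ (Fin n) × EuclideanSpace ℝ (Fin m) => S q.1 q.2)
    (h : EuclideanSpace ℝ (Fin n) → ℝ) (hconv : ConvexOn ℝ Set.univ h)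
    (hC1 : ContDiff ℝ 1 h)
    (L : EuclideanSpace ℝ (Fin m) ≃L[ℝ] EuclideanSpace ℝ (Fin m))
    (M : ℝ → EuclideanSpace ℝ (Fin n) → EuclideanSpace ℝ (Fin m) → ℝ)
    (hM0 : ∀ x z, M 0 x z = S x z)
    (hMpos : ∀ lam : ℝ, 0 < lam → ∀ x z, M lam x z = moreauEnv2 S lam x z)
    (rho : ℝ → EuclideanSpace ℝ (Fin n) → EuclideanSpace ℝ (Fin m) → EReal)
    (hrho : ∀ lam x v, rho lam x v =
      sSup {e : EReal | ∃ r : ℝ, 0 < r ∧ e = (r : EReal) ∧ M lam x (r • L v) ≤ h x}) :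
    ∀ lam : ℝ, 0 ≤ lam → ∀ x : EuclideanSpace ℝ (Fin n), S x 0 < h x →
    ∀ v : EuclideanSpace ℝ (Fin m), ‖v‖ = 1 →
    ∀ (lamk : ℕ → ℝ) (xk : ℕ → EuclideanSpace ℝ (Fin n))
      (vk : ℕ → EuclideanSpace ℝ (Fin m)),
      (∀ k, 0 < lamk k) → Tendsto lamk atTop (𝓝 lam) →
      Tendsto xk atTop (𝓝 x) → Tendsto vk atTop (𝓝 v) →
      Tendsto (fun k => rho (lamk k) (xk k) (vk k)) atTop (𝓝 (rho lam x v)) :=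
  stmt11_general S hSconv hScont h hC1 L M hM0 hMpos rho hrho
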